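/- The tent graph is not narrow: in the tent, there is a vertex at distance 2 from a longest shortest path. -/
import Mathlib


open SimpleGraph

/-- `σ` is a proper interval ordering of `G`: whenever `σ u < σ v < σ w` and
`{u,w}` is an edge, both `{u,v}` and `{v,w}` are edges. -/
def IsPIO {V : Type*} {n : ℕ} (G : SimpleGraph V) (σ : V ≃ Fin n) : Prop :=
  ∀ u v w : V, σ u < σ v → σ v < σ w → G.Adj u w → G.Adj u v ∧ G.Adj v w

/-- `G` admits a proper interval ordering. -/
def HasPIO {V : Type*} [Fintype V] (G : SimpleGraph V) : Prop :=
  ∃ σ : V ≃ Fin (Fintype.card V), IsPIO G σ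

/-- Chordal: no induced cycle of length ≥ 4. -/
def Chordal {V : Type*} (G : SimpleGraph V) : Prop :=
  ∀ n : ℕ, 4 ≤ n → IsEmpty (cycleGraph n ↪g G)

/-- The claw `K_{1,3}`. -/
def clawGraph : SimpleGraph (Fin 4) :=
  fromEdgeSet {s(0,1), s(0,2), s(0,3)}

/-- The net: a triangle `0,1,2` with pendant vertices `3,4,5`. -/
def netGraph : SimpleGraph (Fin 6) :=
  fromEdgeSet {s(0,1), s(1,2), s(0,2), s(0,3), s(1,4), s(2,5)}

/-- The tent (3-sun): inner triangle `0,1,2`, outer vertices `3,4,5`. -/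
def tentGraph : SimpleGraph (Fin 6) :=
  fromEdgeSet {s(0,1), s(1,2), s(0,2), s(3,0), s(3,1), s(4,1), s(4,2), s(5,2), s(5,0)}

/-- A longest shortest path: a shortest path between two vertices at maximal distance. -/
def IsLongestShortestPath {V : Type*} (G : SimpleGraph V) {u w : V} (p : G.Walk u w) : Prop :=
  p.IsPath ∧ p.length = G.dist u w ∧ ∀ a b : V, G.dist a b ≤ G.dist u w

/-- Narrow: every vertex lies on, or is adjacent to a vertex of, every longest shortest path. -/
def Narrow {V : Type*} (G : SimpleGraph V) : Prop :=
  ∀ (v u w : V) (p : G.Walk u w), IsLongestShortestPath G p →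
    v ∈ p.support ∨ ∃ x ∈ p.support, G.Adj v x

instance : DecidableRel tentGraph.Adj := fun a b => by
  simp only [tentGraph, fromEdgeSet_adj, Set.mem_insert_iff, Set.mem_singleton_iff]
  infer_instance

lemma tent_common : ∀ a b : Fin 6, a ≠ b → ∃ c, tentGraph.Adj a c ∧ tentGraph.Adj c b := by decide

lemma tent_dist_le (a b : Fin 6) : tentGraph.dist a b ≤ 2 := by
  rcases eq_or_ne a b with rfl | h
  · simp [dist_self]
  · obtain ⟨c, h1, h2⟩ := tent_common a b h
    calc tentGraph.dist a b ≤ (Walk.cons h1 (Walk.cons h2 Walk.nil)).length := dist_le _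
    _ = 2 := rfl

lemma tent_dist_two (a b : Fin 6) (h : a ≠ b) (hn : ¬ tentGraph.Adj a b) :
    tentGraph.dist a b = 2 := by
  have hle := tent_dist_le a b
  have h0 : tentGraph.dist a b ≠ 0 := by
    obtain ⟨c, h1, h2⟩ := tent_common a b h
    rw [dist_ne_zero_iff_ne_and_reachable]
    exact ⟨h, ⟨Walk.cons h1 (Walk.cons h2 Walk.nil)⟩⟩
  have h1 : tentGraph.dist a b ≠ 1 := fun e => hn ((dist_eq_one_iff_adj).mp e)
  omega

theorem tentGraph_not_narrow :
    ∃ (v u w : Fin 6) (p : tentGraph.Walk u w), IsLongestShortestPath tentGraph p ∧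
      (∀ x ∈ p.support, 2 ≤ tentGraph.dist v x) ∧ (∃ x ∈ p.support, tentGraph.dist v x = 2) := by
  have h31 : tentGraph.Adj 3 1 := by decide
  have h14 : tentGraph.Adj 1 4 := by decide
  refine ⟨5, 3, 4, Walk.cons h31 (Walk.cons h14 Walk.nil), ⟨?_, ?_, ?_⟩, ?_, ?_⟩
  · rw [Walk.isPath_def]
    simp [Walk.support]
  · rw [tent_dist_two 3 4 (by decide) (by decide)]; rfl
  · intro a b
    rw [tent_dist_two 3 4 (by decide) (by decide)]
    exact tent_dist_le a b
  · intro x hx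
    simp [Walk.support] at hx
    rcases hx with rfl | rfl | rfl <;>
      exact le_of_eq (tent_dist_two 5 _ (by decide) (by decide)).symm
  · exact ⟨3, by simp [Walk.support], tent_dist_two 5 3 (by decide) (by decide)⟩
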